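/- arXiv:2211.00983 — 2 statements merged into one kernel-verified Lean document; each statement's English description precedes it below -/
import Mathlib

section
/- Let ρ_s, ρ_l, R, μ_l, F_ex, α_l, q_h, h_m be positive real numbers and let q_s ≥ 0 with q_s < q_h. Define F(U) = ((ρ_s/ρ_l)·R·U)^{4/3}·(3π·μ_l/(2·F_ex))^{1/3}. Then there exists a unique U > 0 satisfying the transient power-controlled close-contact melting equation ((ρ_s·h_m·U + q_s)/q_h)·(7·F(U)/(20·α_l) + 1) + 3·F(U)/(20·α_l) − 1 = 0. -/
/-!
The left-hand side of the melting equation is continuous and strictly increasing in `U ≥ 0`: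
the melt-flux factor `(ρ_s h_m U + q_s) / q_h` is affine with positive slope and nonnegative,
and the film term `F` is a nonnegative, nondecreasing power law vanishing at `0`.
It equals `q_s / q_h - 1 < 0` at `U = 0` and is nonnegative at `U = q_h / (ρ_s h_m)`, where the
melt-flux factor is already at least `1`; the intermediate value theorem and strict monotonicity
give existence and uniqueness of the positive root.
-/

open Real Set

theorem existsUnique_pos_eq_zero_of_strictMonoOn {g : ℝ → ℝ} {b : ℝ} (hb : 0 ≤ b)
    (hmono : StrictMonoOn g (Ici 0)) (hcont : ContinuousOn g (Icc 0 b))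
    (h0 : g 0 < 0) (hgb : 0 ≤ g b) : ∃! U, 0 < U ∧ g U = 0 := by
  obtain ⟨U, hU, hgU⟩ := intermediate_value_Ioc hb hcont ⟨h0, hgb⟩
  exact ⟨U, ⟨hU.1, hgU⟩, fun V hV => hmono.injOn hV.1.le hU.1.le (hV.2.trans hgU.symm)⟩

section PowerLaw

variable {a c p : ℝ}

theorem monotoneOn_rpow_mul_const (ha : 0 ≤ a) (hc : 0 ≤ c) (hp : 0 ≤ p) :
    MonotoneOn (fun U : ℝ => (a * U) ^ p * c) (Ici 0) := fun _ hU _ _ hUV =>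
  mul_le_mul_of_nonneg_right
    (rpow_le_rpow (mul_nonneg ha hU) (mul_le_mul_of_nonneg_left hUV ha) hp) hc

theorem continuous_rpow_mul_const (a c : ℝ) (hp : 0 ≤ p) :
    Continuous fun U : ℝ => (a * U) ^ p * c :=
  ((continuous_rpow_const hp).comp (continuous_const_mul a)).mul continuous_const

end PowerLaw

section MeltingResidual

variable (ρs hm qs qh αl : ℝ) (F : ℝ → ℝ)

noncomputable def meltingResidual (U : ℝ) : ℝ :=
  ((ρs * hm * U + qs) / qh) * (7 * F U / (20 * αl) + 1) + 3 * F U / (20 * αl) - 1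

variable {ρs hm qs qh αl F}

theorem continuous_meltingResidual (hF : Continuous F) :
    Continuous (meltingResidual ρs hm qs qh αl F) := by
  unfold meltingResidual
  fun_prop

theorem meltingResidual_zero_neg (hqh : 0 < qh) (hqsqh : qs < qh) (hF0 : F 0 = 0) :
    meltingResidual ρs hm qs qh αl F 0 < 0 := by
  have : qs / qh < 1 := (div_lt_one hqh).mpr hqsqh
  simp only [meltingResidual, hF0, mul_zero, zero_add, zero_div, mul_one, add_zero]
  linarith

theorem meltingResidual_nonneg_of_le (hαl : 0 < αl) (hqh : 0 < qh) (hqs : 0 ≤ qs)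
    {U : ℝ} (hU : qh ≤ ρs * hm * U) (hFU : 0 ≤ F U) :
    0 ≤ meltingResidual ρs hm qs qh αl F U := by
  have hflux : 1 ≤ (ρs * hm * U + qs) / qh := by
    rw [le_div_iff₀ hqh]
    linarith
  have hfilm : 1 ≤ 7 * F U / (20 * αl) + 1 := by
    have : 0 ≤ 7 * F U / (20 * αl) := by positivity
    linarith
  have : 0 ≤ 3 * F U / (20 * αl) := by positivity
  have := one_le_mul_of_one_le_of_one_le hflux hfilm
  unfold meltingResidual
  linarith

theorem strictMonoOn_meltingResidual (hρs : 0 < ρs) (hhm : 0 < hm) (hqh : 0 < qh)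
    (hαl : 0 < αl) (hqs : 0 ≤ qs) (hFmono : MonotoneOn F (Ici 0)) (hF0 : F 0 = 0) :
    StrictMonoOn (meltingResidual ρs hm qs qh αl F) (Ici 0) := by
  intro U hU V hV hUV
  have hFUV : F U ≤ F V := hFmono hU hV hUV.le
  have hFU : 0 ≤ F U := hF0 ▸ hFmono self_mem_Ici hU hU
  have hfluxU : 0 ≤ (ρs * hm * U + qs) / qh := by
    have : 0 ≤ ρs * hm * U := mul_nonneg (by positivity) hU
    positivity
  have hflux : (ρs * hm * U + qs) / qh < (ρs * hm * V + qs) / qh := by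
    gcongr
  have hfilm : 7 * F U / (20 * αl) + 1 ≤ 7 * F V / (20 * αl) + 1 := by gcongr
  have hfilmV : 0 < 7 * F V / (20 * αl) + 1 := by
    have : 0 ≤ 7 * F V / (20 * αl) := by have := hFU.trans hFUV; positivity
    linarith
  have hcross : 3 * F U / (20 * αl) ≤ 3 * F V / (20 * αl) := by gcongr
  have hprod := (mul_le_mul_of_nonneg_left hfilm hfluxU).trans_lt
    (mul_lt_mul_of_pos_right hflux hfilmV)
  unfold meltingResidual
  linarith

end MeltingResidual

/-- the transient power-controlled close-contact melting equation
has a unique positive solution `U`, provided `0 ≤ q_s < q_h`. -/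
theorem stmt_8 (ρs ρl R μl Fex αl qh hm qs : ℝ) (F : ℝ → ℝ)
    (hρs : 0 < ρs) (hρl : 0 < ρl) (hR : 0 < R) (hμl : 0 < μl) (hFex : 0 < Fex)
    (hαl : 0 < αl) (hqh : 0 < qh) (hhm : 0 < hm) (hqs : 0 ≤ qs) (hqsqh : qs < qh)
    (hF : ∀ U : ℝ, F U = ((ρs / ρl) * R * U) ^ ((4 : ℝ) / 3) *
      (3 * π * μl / (2 * Fex)) ^ ((1 : ℝ) / 3)) :
    ∃! U : ℝ, 0 < U ∧
      ((ρs * hm * U + qs) / qh) * (7 * F U / (20 * αl) + 1) +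
        3 * F U / (20 * αl) - 1 = 0 := by
  have hFeq : F = fun U => ((ρs / ρl) * R * U) ^ ((4 : ℝ) / 3) *
      (3 * π * μl / (2 * Fex)) ^ ((1 : ℝ) / 3) := funext hF
  have hexp : (0 : ℝ) ≤ 4 / 3 := by norm_num
  have hFmono : MonotoneOn F (Ici 0) :=
    hFeq ▸ monotoneOn_rpow_mul_const (by positivity) (by positivity) hexp
  have hF0 : F 0 = 0 := by simp [hF]
  have hU₀ : 0 < qh / (ρs * hm) := by positivity
  exact existsUnique_pos_eq_zero_of_strictMonoOn hU₀.le
    (strictMonoOn_meltingResidual hρs hhm hqh hαl hqs hFmono hF0)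
    (hFeq ▸ continuous_meltingResidual (continuous_rpow_mul_const _ _ hexp)).continuousOn
    (meltingResidual_zero_neg hqh hqsqh hF0)
    (meltingResidual_nonneg_of_le hαl hqh hqs (mul_div_cancel₀ qh (by positivity)).ge
      (hF0 ▸ hFmono self_mem_Ici hU₀.le hU₀.le))
end

section
/- Let ρ_s, ρ_l, R, μ_l, F_ex, α_l, q_h, h_m be positive real numbers and define F(U) = ((ρ_s/ρ_l)·R·U)^{4/3}·(3π·μ_l/(2·F_ex))^{1/3}. For 0 ≤ q_s < q_h let U(q_s) denote the unique positive solution of ((ρ_s·h_m·U + q_s)/q_h)·(7·F(U)/(20·α_l) + 1) + 3·F(U)/(20·α_l) − 1 = 0. Then U is strictly decreasing in q_s: if 0 ≤ q_1 < q_2 < q_h then U(q_1) > U(q_2). In particular, the transient power-controlled melting velocity never exceeds U(0). -/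
open Real

/-- the transient power-controlled melting velocity `U(q_s)`,
defined as the unique positive root of the nonlinear equation, is strictly
decreasing in the solid-side heat flux `q_s` on `[0, q_h)`; in particular it
never exceeds `U(0)`. -/
theorem stmt_10 (ρs ρl R μl Fex αl qh hm : ℝ) (F : ℝ → ℝ) (U : ℝ → ℝ)
    (hρs : 0 < ρs) (hρl : 0 < ρl) (hR : 0 < R) (hμl : 0 < μl) (hFex : 0 < Fex)
    (hαl : 0 < αl) (hqh : 0 < qh) (hhm : 0 < hm)
    (hF : ∀ V : ℝ, F V = ((ρs / ρl) * R * V) ^ ((4 : ℝ) / 3) *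
      (3 * π * μl / (2 * Fex)) ^ ((1 : ℝ) / 3))
    (hU : ∀ qs : ℝ, 0 ≤ qs → qs < qh → 0 < U qs ∧
      ((ρs * hm * (U qs) + qs) / qh) * (7 * F (U qs) / (20 * αl) + 1) +
        3 * F (U qs) / (20 * αl) - 1 = 0) :
    (∀ q₁ q₂ : ℝ, 0 ≤ q₁ → q₁ < q₂ → q₂ < qh → U q₂ < U q₁) ∧
    (∀ qs : ℝ, 0 ≤ qs → qs < qh → U qs ≤ U 0) := by
  have hπ := Real.pi_pos
  have hc : (0:ℝ) < (3 * π * μl / (2 * Fex)) ^ ((1:ℝ)/3) := by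
    apply Real.rpow_pos_of_pos; positivity
  have hFnonneg : ∀ u : ℝ, 0 < u → 0 ≤ F u := by
    intro u hu
    rw [hF u]
    exact mul_nonneg (Real.rpow_nonneg (by positivity) _) hc.le
  have hFmono : ∀ u v : ℝ, 0 ≤ u → u ≤ v → F u ≤ F v := by
    intro u v hu huv
    rw [hF u, hF v]
    apply mul_le_mul_of_nonneg_right _ hc.le
    apply Real.rpow_le_rpow (by positivity) _ (by norm_num)
    have : 0 < ρs / ρl * R := by positivity
    nlinarith
  have key : ∀ q₁ q₂ : ℝ, 0 ≤ q₁ → q₁ < q₂ → q₂ < qh → U q₂ < U q₁ := by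
    intro q₁ q₂ h1 h12 h2
    obtain ⟨hu1, he1⟩ := hU q₁ h1 (h12.trans h2)
    obtain ⟨hu2, he2⟩ := hU q₂ (h1.trans h12.le) h2
    by_contra hcon
    push_neg at hcon
    have hFle : F (U q₁) ≤ F (U q₂) := hFmono _ _ hu1.le hcon
    have hF1 := hFnonneg (U q₁) hu1
    set u1 := U q₁
    set u2 := U q₂
    set f1 := F u1
    set f2 := F u2
    have hA : (ρs * hm * u1 + q₁) / qh < (ρs * hm * u2 + q₂) / qh := by
      apply div_lt_div_of_pos_right _ hqh
      nlinarith [mul_le_mul_of_nonneg_left hcon (by positivity : (0:ℝ) ≤ ρs * hm)]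
    have hA1 : 0 < (ρs * hm * u1 + q₁) / qh := by
      apply div_pos _ hqh
      nlinarith [mul_pos (mul_pos hρs hhm) hu1]
    have hB : 7 * f1 / (20 * αl) + 1 ≤ 7 * f2 / (20 * αl) + 1 := by
      have : 7 * f1 / (20 * αl) ≤ 7 * f2 / (20 * αl) := by
        apply div_le_div_of_nonneg_right _ (by positivity)
        linarith
      linarith
    have hB1 : 0 < 7 * f1 / (20 * αl) + 1 := by
      have : 0 ≤ 7 * f1 / (20 * αl) := div_nonneg (by linarith) (by positivity)
      linarith
    have hC : 3 * f1 / (20 * αl) ≤ 3 * f2 / (20 * αl) := by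
      apply div_le_div_of_nonneg_right _ (by positivity)
      linarith
    have hAB : (ρs * hm * u1 + q₁) / qh * (7 * f1 / (20 * αl) + 1) <
        (ρs * hm * u2 + q₂) / qh * (7 * f2 / (20 * αl) + 1) :=
      mul_lt_mul hA hB hB1 (le_trans hA1.le hA.le)
    linarith
  refine ⟨key, ?_⟩
  intro qs h0 hlt
  rcases eq_or_lt_of_le h0 with h | h
  · rw [← h]
  · exact (key 0 qs le_rfl h hlt).le
end
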